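/- arXiv:math/9707202 — 8 statements merged into one kernel-verified Lean document; each statement's English description precedes it below -/
import Mathlib

section
/- Let κ be a regular cardinal and (P, ≤) a partial order of cardinality κ such that every antichain of P has cardinality < κ and for every α ∈ P the set {β ∈ P : β < α} has cardinality < κ. Then for every subset A ⊆ P there exists A' ⊆ A with |A'| < κ such that for every α ∈ A there is γ ∈ A' with γ ≤ α. -/
open Cardinal

/-- Lemma 1.2: in a partial order of regular size `κ` with all antichains small
and all strict lower cones small, every subset `A` has a small subset `A'`
which is coinitial in `A`. -/
theorem exists_small_coinitial_subset
    (P : Type*) [PartialOrder P] (κ : Cardinal) (hreg : κ.IsRegular)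
    (hP : #P = κ)
    (hanti : ∀ A : Set P, IsAntichain (· ≤ ·) A → #A < κ)
    (hcone : ∀ α : P, #{β : P | β < α} < κ) :
    ∀ A : Set P, ∃ A' : Set P, A' ⊆ A ∧ #A' < κ ∧
      ∀ α ∈ A, ∃ γ ∈ A', γ ≤ α := by
  intro A
  -- get a maximal antichain B inside A
  obtain ⟨B, hBmax⟩ := zorn_subset {C : Set P | C ⊆ A ∧ IsAntichain (· ≤ ·) C} (by
    intro c hc hchain
    refine ⟨⋃₀ c, ⟨?_, ?_⟩, fun s hs => Set.subset_sUnion_of_mem hs⟩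
    · intro x hx
      obtain ⟨s, hs, hxs⟩ := hx
      exact (hc hs).1 hxs
    · intro x hx y hy hxy hle
      obtain ⟨s, hs, hxs⟩ := hx
      obtain ⟨t, ht, hyt⟩ := hy
      rcases hchain.total hs ht with h | h
      · exact (hc ht).2 (h hxs) hyt hxy hle
      · exact (hc hs).2 hxs (h hyt) hxy hle)
  obtain ⟨⟨hBA, hBanti⟩, hmax⟩ := hBmax
  refine ⟨{α ∈ A | ∃ β ∈ B, α ≤ β}, fun x hx => hx.1, ?_, ?_⟩
  · -- cardinality bound
    have hsub : {α ∈ A | ∃ β ∈ B, α ≤ β} ⊆ ⋃ β : B, {α : P | α ≤ (β : P)} := by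
      rintro x ⟨_, β, hβ, hle⟩
      exact Set.mem_iUnion.2 ⟨⟨β, hβ⟩, hle⟩
    refine (Cardinal.mk_le_mk_of_subset hsub).trans_lt ?_
    refine (Cardinal.mk_iUnion_le_sum_mk).trans_lt ?_
    refine Cardinal.sum_lt_of_isRegular hreg (hanti B hBanti) ?_
    intro β
    have hsub2 : {α : P | α ≤ (β : P)} ⊆ {α : P | α < (β : P)} ∪ {(β : P)} := by
      intro x hx
      rcases lt_or_eq_of_le hx with h | h
      · exact Or.inl h
      · exact Or.inr h
    refine (Cardinal.mk_le_mk_of_subset hsub2).trans_lt ?_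
    refine (Cardinal.mk_union_le _ _).trans_lt ?_
    refine Cardinal.add_lt_of_lt hreg.aleph0_le (hcone β) ?_
    simpa using one_lt_aleph0.trans_le hreg.aleph0_le
  · -- coinitiality
    intro α hα
    by_cases h : ∃ β ∈ B, α ≤ β ∨ β ≤ α
    · obtain ⟨β, hβ, h | h⟩ := h
      · exact ⟨α, ⟨hα, β, hβ, h⟩, le_refl α⟩
      · exact ⟨β, ⟨hBA hβ, β, hβ, le_refl β⟩, h⟩
    · push_neg at h
      exfalso
      have hαB : α ∉ B := fun hαB => (h α hαB).1 (le_refl α)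
      have : insert α B ∈ {C : Set P | C ⊆ A ∧ IsAntichain (· ≤ ·) C} := by
        refine ⟨Set.insert_subset hα hBA, ?_⟩
        refine hBanti.insert (fun b hb hne hle => (h b hb).2 hle)
          (fun b hb hne hle => (h b hb).1 hle)
      exact hαB (hmax this (Set.subset_insert α B) (Set.mem_insert α B))
end

section
/- Every infinite partial order (P, ≤) admits at least 2^ℵ₀ many monotone functions from P to P. -/
open Cardinal

universe u

section Aux

variable {Q : Type u} [PartialOrder Q]

/-- If a partial order contains a strictly increasing `ℕ`-indexed sequence, it admits
at least continuum many monotone self-maps. -/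
theorem aux_chain_case (z : ℕ → Q) (hz : StrictMono z) :
    Cardinal.continuum ≤ #{f : Q → Q // Monotone f} := by
  classical
  -- encode a set `S ⊆ ℕ` as a strictly monotone function `g S : ℕ → ℕ`
  set g : Set ℕ → ℕ → ℕ := fun S n => 2 * n + ((Finset.range n).filter (· ∈ S)).card with hgdef
  have hcard : ∀ (S : Set ℕ) n, ((Finset.range (n + 1)).filter (· ∈ S)).card
      = ((Finset.range n).filter (· ∈ S)).card + (if n ∈ S then 1 else 0) := by
    intro S n
    rw [Finset.range_add_one, Finset.filter_insert]
    split
    · rw [Finset.card_insert_of_notMem (by simp)]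
    · simp
  have hgmono : ∀ S, StrictMono (g S) := by
    intro S
    apply strictMono_nat_of_lt_succ
    intro n
    simp only [hgdef, hcard S n]
    omega
  have hginj : ∀ S T : Set ℕ, (∀ n, g S n = g T n) → S = T := by
    intro S T h
    ext n
    have h1 := h (n + 1)
    have h2 := h n
    simp only [hgdef] at h1 h2
    rw [hcard S n, hcard T n] at h1
    by_cases hS : n ∈ S <;> by_cases hT : n ∈ T <;> simp_all
  -- the monotone map associated to `S`
  set F : Set ℕ → Q → Q := fun S p =>
    if ∀ k, z k ≤ p then p else z (g S (sInf {k | ¬ z k ≤ p})) with hFdef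
  have hmemInf : ∀ p : Q, ¬ (∀ k, z k ≤ p) → sInf {k | ¬ z k ≤ p} ∈ {k | ¬ z k ≤ p} := by
    intro p hp
    obtain ⟨k, hk⟩ := not_forall.1 hp
    exact Nat.sInf_mem ⟨k, hk⟩
  have hInfmono : ∀ p q : Q, p ≤ q → ¬ (∀ k, z k ≤ p) → ¬ (∀ k, z k ≤ q) →
      sInf {k | ¬ z k ≤ p} ≤ sInf {k | ¬ z k ≤ q} := by
    intro p q hpq hp hq
    refine Nat.sInf_le ?_
    have := hmemInf q hq
    exact fun h => this (h.trans hpq)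
  have hFmono : ∀ S, Monotone (F S) := by
    intro S p q hpq
    by_cases hp : ∀ k, z k ≤ p
    · have hq : ∀ k, z k ≤ q := fun k => (hp k).trans hpq
      simp only [hFdef, if_pos hp, if_pos hq]
      exact hpq
    · by_cases hq : ∀ k, z k ≤ q
      · simp only [hFdef, if_neg hp, if_pos hq]
        exact hq _
      · simp only [hFdef, if_neg hp, if_neg hq]
        exact hz.monotone ((hgmono S).monotone (hInfmono p q hpq hp hq))
  -- value of `F S` on the chain
  have hFval : ∀ S m, F S (z m) = z (g S (m + 1)) := by
    intro S m
    have hnot : ¬ z (m + 1) ≤ z m := (hz (Nat.lt_succ_self m)).not_ge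
    have hp : ¬ ∀ k, z k ≤ z m := fun h => hnot (h (m + 1))
    have hInf : sInf {k | ¬ z k ≤ z m} = m + 1 := by
      refine le_antisymm (Nat.sInf_le hnot) ?_
      by_contra hlt
      have hle : sInf {k | ¬ z k ≤ z m} ≤ m := by omega
      exact (hmemInf (z m) hp) (hz.monotone hle)
    simp only [hFdef, if_neg hp, hInf]
  have hFinj : Function.Injective fun S : Set ℕ => (⟨F S, hFmono S⟩ : {f : Q → Q // Monotone f}) := by
    intro S T h
    have h' : F S = F T := congrArg Subtype.val h
    apply hginj
    intro n
    cases n with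
    | zero => simp [hgdef]
    | succ m =>
      have := congrFun h' (z m)
      rw [hFval S m, hFval T m] at this
      exact hz.injective this
  have hFinj' : Function.Injective fun S : Set (ULift.{u} ℕ) =>
      (⟨F ((Equiv.Set.congr Equiv.ulift) S), hFmono _⟩ : {f : Q → Q // Monotone f}) :=
    hFinj.comp (Equiv.Set.congr Equiv.ulift).injective
  calc Cardinal.continuum = 2 ^ Cardinal.aleph0 := Cardinal.two_power_aleph0.symm
    _ = #(Set (ULift.{u} ℕ)) := by simp [Cardinal.mk_set]
    _ ≤ #{f : Q → Q // Monotone f} := Cardinal.mk_le_of_injective hFinj'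

/-- If a partial order contains an injective `ℕ`-indexed antichain, it admits
at least continuum many monotone self-maps. -/
theorem aux_antichain_case (w : ℕ → Q) (hinj : Function.Injective w)
    (hanti : ∀ i j, i ≠ j → ¬ w i ≤ w j) :
    Cardinal.continuum ≤ #{f : Q → Q // Monotone f} := by
  classical
  by_cases hex : ∃ s t : Q, s < t
  · obtain ⟨s, t, hst⟩ := hex
    set F : Set ℕ → Q → Q := fun S p => if ∃ n ∈ S, w n ≤ p then t else s with hFdef
    have hFmono : ∀ S, Monotone (F S) := by
      intro S p q hpq
      by_cases hp : ∃ n ∈ S, w n ≤ p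
      · have hq : ∃ n ∈ S, w n ≤ q := by
          obtain ⟨n, hn, hle⟩ := hp; exact ⟨n, hn, hle.trans hpq⟩
        simp [hFdef, hp, hq]
      · simp only [hFdef, if_neg hp]
        split
        · exact hst.le
        · exact le_rfl
    have hFval : ∀ S n, F S (w n) = if n ∈ S then t else s := by
      intro S n
      by_cases hn : n ∈ S
      · simp only [hFdef, if_pos hn]
        rw [if_pos ⟨n, hn, le_rfl⟩]
      · simp only [hFdef, if_neg hn]
        rw [if_neg]
        rintro ⟨m, hm, hle⟩
        exact hanti m n (fun h => hn (h ▸ hm)) hle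
    have hFinj : Function.Injective
        fun S : Set ℕ => (⟨F S, hFmono S⟩ : {f : Q → Q // Monotone f}) := by
      intro S T h
      have h' : F S = F T := congrArg Subtype.val h
      ext n
      have := congrFun h' (w n)
      rw [hFval S n, hFval T n] at this
      by_cases hS : n ∈ S <;> by_cases hT : n ∈ T
      · simp [hS, hT]
      · rw [if_pos hS, if_neg hT] at this; exact absurd this hst.ne'
      · rw [if_neg hS, if_pos hT] at this; exact absurd this hst.ne
      · simp [hS, hT]
    have hFinj' : Function.Injective fun S : Set (ULift.{u} ℕ) =>
        (⟨F ((Equiv.Set.congr Equiv.ulift) S), hFmono _⟩ : {f : Q → Q // Monotone f}) :=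
      hFinj.comp (Equiv.Set.congr Equiv.ulift).injective
    calc Cardinal.continuum = 2 ^ Cardinal.aleph0 := Cardinal.two_power_aleph0.symm
      _ = #(Set (ULift.{u} ℕ)) := by simp [Cardinal.mk_set]
      _ ≤ #{f : Q → Q // Monotone f} := Cardinal.mk_le_of_injective hFinj'
  · -- `Q` is itself an antichain: every self-map is monotone
    push_neg at hex
    have hall : ∀ f : Q → Q, Monotone f := by
      intro f p q hpq
      rcases eq_or_lt_of_le hpq with rfl | hlt
      · exact le_rfl
      · exact absurd hlt (hex p q)
    have hInf : Infinite Q := Infinite.of_injective w hinj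
    have h1 : Cardinal.aleph0 ≤ #Q := Cardinal.aleph0_le_mk Q
    calc Cardinal.continuum = 2 ^ Cardinal.aleph0 := Cardinal.two_power_aleph0.symm
      _ ≤ 2 ^ #Q := by
          exact Cardinal.power_le_power_left (by norm_num) h1
      _ ≤ #Q ^ #Q := by
          refine Cardinal.power_le_power_right (le_trans ?_ h1)
          exact_mod_cast (Cardinal.nat_lt_aleph0 2).le
      _ = #(Q → Q) := (Cardinal.power_def Q Q).symm
      _ = #{f : Q → Q // Monotone f} :=
          (Cardinal.mk_congr (Equiv.subtypeUnivEquiv hall)).symm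

end Aux

/-- Every infinite partial order admits at least `2^ℵ₀` many monotone
self-maps. -/
theorem continuum_le_card_monotone_maps
    (P : Type*) [PartialOrder P] [Infinite P] :
    Cardinal.continuum ≤ #{f : P → P // Monotone f} := by
  classical
  let f : ℕ ↪ P := Infinite.natEmbedding P
  obtain ⟨g, hg | hg⟩ := exists_increasing_or_nonincreasing_subseq
      ((· < ·) : P → P → Prop) (fun n => f n)
  · exact aux_chain_case (fun n => f (g n)) (fun m n h => hg m n h)
  · obtain ⟨g', hg' | hg'⟩ := exists_increasing_or_nonincreasing_subseq
        ((· > ·) : P → P → Prop) (fun n => f (g n))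
    · -- strictly decreasing sequence: dualize
      have hdual : Cardinal.continuum ≤ #{h : Pᵒᵈ → Pᵒᵈ // Monotone h} := by
        refine aux_chain_case (Q := Pᵒᵈ) (fun n => OrderDual.toDual (f (g (g' n)))) ?_
        intro m n hmn
        exact hg' m n hmn
      refine hdual.trans (le_of_eq (Cardinal.mk_congr ?_))
      exact Equiv.subtypeEquiv (Equiv.refl (P → P))
        (fun h => ⟨fun hm a b hab => hm hab, fun hm a b hab => hm hab⟩)
    · -- pairwise incomparable sequence: antichain
      set w : ℕ → P := fun n => f (g (g' n)) with hwdef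
      have hwinj : Function.Injective w := by
        intro a b h
        exact g'.injective (g.injective (f.injective h))
      refine aux_antichain_case w hwinj ?_
      intro i j hij hle
      rcases lt_or_gt_of_ne hij with h | h
      · have hlt : w i < w j := lt_of_le_of_ne hle (fun he => hij (hwinj he))
        exact hg (g' i) (g' j) (g'.strictMono h) hlt
      · have hlt : w i < w j := lt_of_le_of_ne hle (fun he => hij (hwinj he))
        exact hg' j i h hlt
end

section
/- Let κ be a regular cardinal and (P, ≤) a partial order with |P| = κ satisfying: (C1) every antichain is small (of size < κ); (C2) for every monotone g : P → P there is a small set A ⊆ P such that g(α) ∈ A ∪ {α} for all α ∈ P; (C3) for every α ∈ P the set {β : β < α} is small; (C4) every small subset of P × P is first-order definable with parameters in (P, ≤). Then every monotone map g : P → P is first-order definable with parameters in (P, ≤). -/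
open FirstOrder Cardinal

open Set

universe u

/-- Every up-closed subset of `P` is the upward closure of a small subset,
provided all antichains and all strict lower cones are small. -/
lemma upset_small_generated {P : Type u} [PartialOrder P] {κ : Cardinal.{u}}
    (hreg : κ.IsRegular) (hP : #P = κ)
    (C1 : ∀ A : Set P, IsAntichain (· ≤ ·) A → #A < κ)
    (C3 : ∀ α : P, #{β : P | β < α} < κ)
    (U : Set P) (hU : ∀ ⦃x y : P⦄, x ∈ U → x ≤ y → y ∈ U) :
    ∃ G : Set P, G ⊆ U ∧ #G < κ ∧ ∀ x, x ∈ U ↔ ∃ u ∈ G, u ≤ x := by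
  classical
  -- a well-order of `P` of order type `κ.ord`
  obtain ⟨e⟩ : Nonempty (P ≃ κ.ord.ToType) :=
    Cardinal.eq.1 (hP.trans (mk_ord_toType κ).symm)
  have wfo : WellFounded ((· < ·) : κ.ord.ToType → κ.ord.ToType → Prop) :=
    IsWellFounded.wf
  have hwfr : WellFounded (InvImage ((· < ·) : κ.ord.ToType → κ.ord.ToType → Prop) e) :=
    InvImage.wf e wfo
  set G : Set P := {u | u ∈ U ∧ ∀ v ∈ U, v ≤ u → ¬ e v < e u} with hGdef
  have hGsub : G ⊆ U := fun u hu => hu.1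
  have hgen : ∀ x, x ∈ U ↔ ∃ u ∈ G, u ≤ x := by
    intro x
    constructor
    · intro hx
      have hS : ({v | v ∈ U ∧ v ≤ x} : Set P).Nonempty := ⟨x, hx, le_refl x⟩
      set m := hwfr.min {v | v ∈ U ∧ v ≤ x} hS with hm
      have hmm : m ∈ {v | v ∈ U ∧ v ≤ x} := hwfr.min_mem _ hS
      refine ⟨m, ⟨hmm.1, ?_⟩, hmm.2⟩
      intro v hv hvle hlt
      exact hwfr.not_lt_min {v | v ∈ U ∧ v ≤ x} ⟨hv, le_trans hvle hmm.2⟩ hlt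
    · rintro ⟨u, hu, hle⟩
      exact hU hu.1 hle
  refine ⟨G, hGsub, ?_, hgen⟩
  -- smallness of `G`
  by_contra hbig
  have hGk : κ ≤ #G := not_lt.1 hbig
  -- the sets we exclude at each step of the recursion are small
  set Excl : P → Set P := fun p => {w | e w ≤ e p} ∪ {w | w < p} with hExcldef
  have hone : (1 : Cardinal) < κ := lt_of_lt_of_le one_lt_aleph0 hreg.aleph0_le
  have hExcl : ∀ p : P, #(Excl p) < κ := by
    intro p
    have h1 : #({w : P | e w ≤ e p}) < κ := by
      have hsub : {w : P | e w ≤ e p} ⊆ e ⁻¹' (Iio (e p) ∪ {e p}) := by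
        intro w hw
        have hw' : e w ≤ e p := hw
        rcases hw'.lt_or_eq with h | h
        · exact Or.inl h
        · exact Or.inr h
      refine lt_of_le_of_lt (mk_le_mk_of_subset hsub) ?_
      refine lt_of_le_of_lt (mk_preimage_of_injective e _ e.injective) ?_
      refine lt_of_le_of_lt (mk_union_le _ _) ?_
      exact add_lt_of_lt hreg.aleph0_le (mk_Iio_ord_toType (e p))
        (by rw [mk_singleton]; exact hone)
    refine lt_of_le_of_lt (mk_union_le _ _) ?_
    exact add_lt_of_lt hreg.aleph0_le h1 (C3 p)
  -- at each step we can choose a new element of `G`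
  have key : ∀ (i : κ.ord.ToType) (prev : ∀ j : κ.ord.ToType, j < i → P),
      (G \ ⋃ j : {j : κ.ord.ToType // j < i}, Excl (prev j.1 j.2)).Nonempty := by
    intro i prev
    rw [Set.nonempty_iff_ne_empty]
    intro hemp
    have hsub : G ⊆ ⋃ j : {j : κ.ord.ToType // j < i}, Excl (prev j.1 j.2) :=
      diff_eq_empty.1 hemp
    have hι : #{j : κ.ord.ToType // j < i} < κ := mk_Iio_ord_toType i
    have hun : #(⋃ j : {j : κ.ord.ToType // j < i}, Excl (prev j.1 j.2)) < κ :=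
      (Cardinal.card_iUnion_lt_iff_forall_of_isRegular hreg hι).2 fun j => hExcl _
    exact absurd (hGk.trans (mk_le_mk_of_subset hsub)) (not_le.2 hun)
  -- transfinite recursion
  set F : κ.ord.ToType → P :=
    wfo.fix (fun i rec => (key i (fun j hj => rec j hj)).some) with hFdef
  have hFeq : ∀ i, F i = (key i (fun j _ => F j)).some := by
    intro i
    exact wfo.fix_eq _ i
  have hFspec : ∀ i, F i ∈ G \ ⋃ j : {j : κ.ord.ToType // j < i}, Excl (F j.1) := by
    intro i
    rw [hFeq i]
    exact (key i (fun j _ => F j)).some_mem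
  have hFG : ∀ i, F i ∈ G := fun i => (hFspec i).1
  have hsep : ∀ i j : κ.ord.ToType, j < i → e (F j) < e (F i) ∧ ¬ F i < F j := by
    intro i j hj
    have hni : F i ∉ ⋃ j : {j : κ.ord.ToType // j < i}, Excl (F j.1) := (hFspec i).2
    rw [Set.mem_iUnion] at hni
    push_neg at hni
    have := hni ⟨j, hj⟩
    rw [hExcldef, Set.mem_union] at this
    push_neg at this
    exact ⟨not_le.1 this.1, this.2⟩
  have hinj : Function.Injective F := by
    intro i j hij
    by_contra hne
    rcases Ne.lt_or_gt hne with h | h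
    · exact absurd (congrArg e hij) (ne_of_lt (hsep j i h).1)
    · exact absurd (congrArg e hij) (ne_of_gt (hsep i j h).1)
  have hanti : IsAntichain (· ≤ ·) (Set.range F) := by
    rintro a ⟨i, rfl⟩ b ⟨j, rfl⟩ hne hle
    rcases Ne.lt_or_gt (fun h : i = j => hne (congrArg F h)) with h | h
    · -- i < j : use the `G` property of `F j`
      have h1 : e (F i) < e (F j) := (hsep j i h).1
      exact (hFG j).2 (F i) (hGsub (hFG i)) hle h1
    · -- j < i : `F i` is not below `F j`
      have h2 : ¬ F i < F j := (hsep i j h).2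
      exact h2 (lt_of_le_of_ne hle (fun hh => hne hh))
  have hcard : #(Set.range F) = κ := by
    rw [mk_range_eq F hinj, mk_ord_toType]
  exact absurd (C1 _ hanti) (by rw [hcard]; exact lt_irrefl κ)


/-- Theorem 1.1: if a partial order of regular size `κ` satisfies
(C1) all antichains are small, (C2) every monotone map is almost constant off a
small set, (C3) all strict lower cones are small, and (C4) every small subset
of `P × P` is first-order definable with parameters, then every monotone map
`g : P → P` is first-order definable with parameters in `(P, ≤)`. -/
theorem monotone_maps_definable_of_four_conditions
    (P : Type*) [PartialOrder P] (κ : Cardinal) (hreg : κ.IsRegular)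
    (hP : #P = κ)
    (C1 : ∀ A : Set P, IsAntichain (· ≤ ·) A → #A < κ)
    (C2 : ∀ g : P → P, Monotone g →
      ∃ A : Set P, #A < κ ∧ ∀ α : P, g α ∈ A ∪ {α})
    (C3 : ∀ α : P, #{β : P | β < α} < κ)
    (C4 : ∀ s : Set (Fin 2 → P), #s < κ →
      letI := Language.orderStructure P
      Set.Definable (Set.univ : Set P) Language.order s) :
    ∀ g : P → P, Monotone g →
      letI := Language.orderStructure P
      Set.Definable (Set.univ : Set P) Language.order
        {v : Fin 2 → P | g (v 0) = v 1} := by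
  classical
  intro g hg
  letI := Language.orderStructure P
  haveI hOS : Language.order.OrderedStructure P := ⟨fun x => Iff.rfl⟩
  -- the small set of non-identity values
  obtain ⟨A₀, hA₀, hA₀spec⟩ := C2 g hg
  set A : Set P := g '' {x | g x ≠ x} with hAdef
  have hAsub : A ⊆ A₀ := by
    rintro y ⟨x, hx, rfl⟩
    rcases hA₀spec x with h | h
    · exact h
    · exact absurd h hx
  have hA : #A < κ := lt_of_le_of_lt (mk_le_mk_of_subset hAsub) hA₀
  have hAmoved : ∀ x : P, g x ∉ A → g x = x := by
    intro x hx
    by_contra hne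
    exact hx ⟨x, hne, rfl⟩
  -- the two families of up-closed sets
  have hup₁ : ∀ a : P, ∀ ⦃x y : P⦄, x ∈ {x : P | a ≤ g x} → x ≤ y → y ∈ {x : P | a ≤ g x} :=
    fun a x y hx hxy => le_trans hx (hg hxy)
  have hup₂ : ∀ a : P, ∀ ⦃x y : P⦄, x ∈ {x : P | ¬ g x ≤ a} → x ≤ y →
      y ∈ {x : P | ¬ g x ≤ a} :=
    fun a x y hx hxy hy => hx (le_trans (hg hxy) hy)
  choose G₁ hG₁sub hG₁small hG₁iff using
    fun a : P => upset_small_generated hreg hP C1 C3 {x : P | a ≤ g x} (hup₁ a)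
  choose G₂ hG₂sub hG₂small hG₂iff using
    fun a : P => upset_small_generated hreg hP C1 C3 {x : P | ¬ g x ≤ a} (hup₂ a)
  -- the two small tagged relations
  set R₁ : Set (Fin 2 → P) := {v | v 0 ∈ A ∧ v 1 ∈ G₁ (v 0)} with hR₁def
  set R₂ : Set (Fin 2 → P) := {v | v 0 ∈ A ∧ v 1 ∈ G₂ (v 0)} with hR₂def
  have hsmall : ∀ (Gf : P → Set P), (∀ a, #(Gf a) < κ) →
      #({v : Fin 2 → P | v 0 ∈ A ∧ v 1 ∈ Gf (v 0)}) < κ := by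
    intro Gf hGf
    have hsub : {v : Fin 2 → P | v 0 ∈ A ∧ v 1 ∈ Gf (v 0)} ⊆
        ⋃ a : A, {v : Fin 2 → P | v 0 = (a : P) ∧ v 1 ∈ Gf (a : P)} := by
      intro v hv
      exact Set.mem_iUnion.2 ⟨⟨v 0, hv.1⟩, rfl, hv.2⟩
    refine lt_of_le_of_lt (mk_le_mk_of_subset hsub) ?_
    refine (Cardinal.card_iUnion_lt_iff_forall_of_isRegular hreg hA).2 ?_
    intro a
    have hinj : Function.Injective
        (fun v : {v : Fin 2 → P // v 0 = (a : P) ∧ v 1 ∈ Gf (a : P)} =>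
          (⟨v.1 1, v.2.2⟩ : Gf (a : P))) := by
      rintro ⟨v, hv⟩ ⟨w, hw⟩ h
      simp only [Subtype.mk_eq_mk] at h ⊢
      funext i
      fin_cases i
      · show v 0 = w 0
        rw [hv.1, hw.1]
      · show v 1 = w 1
        exact h
    exact lt_of_le_of_lt (Cardinal.mk_le_of_injective hinj) (hGf _)
  have hd₁ : Set.Definable (Set.univ : Set P) Language.order R₁ :=
    C4 R₁ (hsmall G₁ hG₁small)
  have hd₂ : Set.Definable (Set.univ : Set P) Language.order R₂ :=
    C4 R₂ (hsmall G₂ hG₂small)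
  -- the ≤ relation is definable
  set leSet : Set (Fin 2 → P) := {v | v 0 ≤ v 1} with hleSetdef
  have hdle : Set.Definable (Set.univ : Set P) Language.order leSet := by
    refine Set.Definable.mono ?_ (Set.empty_subset _)
    refine Set.empty_definable_iff.2
      ⟨Language.IsOrdered.leSymb.formula₂ (Language.Term.var 0) (Language.Term.var 1), ?_⟩
    ext v
    simp only [Set.mem_setOf_eq, Language.Formula.realize_rel₂, Language.Term.realize_var,
      Language.relMap_leSymb, Matrix.cons_val_zero, Matrix.cons_val_one, Matrix.head_cons]
    exact Iff.rfl
  -- building blocks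
  set incl : Fin 2 → Fin 3 := ![0, 1] with hincl
  set T₁ : Set (Fin 2 → P) :=
    (fun w : Fin 3 → P => w ∘ incl) ''
      (((fun w : Fin 3 → P => w ∘ (![1, 2] : Fin 2 → Fin 3)) ⁻¹' R₁) ∩
        ((fun w : Fin 3 → P => w ∘ (![2, 0] : Fin 2 → Fin 3)) ⁻¹' leSet)) with hT₁def
  set T₂ : Set (Fin 2 → P) :=
    (fun w : Fin 3 → P => w ∘ incl) ''
      (((fun w : Fin 3 → P => w ∘ (![1, 2] : Fin 2 → Fin 3)) ⁻¹' R₂) ∩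
        ((fun w : Fin 3 → P => w ∘ (![2, 0] : Fin 2 → Fin 3)) ⁻¹' leSet)) with hT₂def
  have hT₁mem : ∀ v : Fin 2 → P, v ∈ T₁ ↔ (v 1 ∈ A ∧ v 1 ≤ g (v 0)) := by
    intro v
    constructor
    · rintro ⟨w, ⟨hw₁, hw₂⟩, hv⟩
      have h0 : w 0 = v 0 := congrFun hv 0
      have h1 : w 1 = v 1 := congrFun hv 1
      have hw₁' : w 1 ∈ A ∧ w 2 ∈ G₁ (w 1) := hw₁
      have hw₂' : w 2 ≤ w 0 := hw₂
      rw [h0] at hw₂'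
      rw [h1] at hw₁'
      refine ⟨hw₁'.1, ?_⟩
      exact ((hG₁iff (v 1) (v 0)).2 ⟨w 2, hw₁'.2, hw₂'⟩ : (v 1) ≤ g (v 0))
    · rintro ⟨hA1, hle1⟩
      obtain ⟨u, hu, hule⟩ := (hG₁iff (v 1) (v 0)).1 hle1
      refine ⟨![v 0, v 1, u], ⟨⟨hA1, hu⟩, hule⟩, ?_⟩
      funext i
      fin_cases i <;> rfl
  have hT₂mem : ∀ v : Fin 2 → P, v ∈ T₂ ↔ (v 1 ∈ A ∧ ¬ g (v 0) ≤ v 1) := by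
    intro v
    constructor
    · rintro ⟨w, ⟨hw₁, hw₂⟩, hv⟩
      have h0 : w 0 = v 0 := congrFun hv 0
      have h1 : w 1 = v 1 := congrFun hv 1
      have hw₁' : w 1 ∈ A ∧ w 2 ∈ G₂ (w 1) := hw₁
      have hw₂' : w 2 ≤ w 0 := hw₂
      rw [h0] at hw₂'
      rw [h1] at hw₁'
      refine ⟨hw₁'.1, ?_⟩
      exact ((hG₂iff (v 1) (v 0)).2 ⟨w 2, hw₁'.2, hw₂'⟩ : ¬ g (v 0) ≤ v 1)
    · rintro ⟨hA1, hle1⟩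
      obtain ⟨u, hu, hule⟩ := (hG₂iff (v 1) (v 0)).1 hle1
      refine ⟨![v 0, v 1, u], ⟨⟨hA1, hu⟩, hule⟩, ?_⟩
      funext i
      fin_cases i <;> rfl
  set Γ : Set (Fin 2 → P) := T₁ ∩ T₂ᶜ with hΓdef
  have hΓmem : ∀ v : Fin 2 → P, v ∈ Γ ↔ (v 1 ∈ A ∧ g (v 0) = v 1) := by
    intro v
    rw [Set.mem_inter_iff, Set.mem_compl_iff, hT₁mem v, hT₂mem v]
    constructor
    · rintro ⟨⟨hA1, hle⟩, hn⟩
      have hge : g (v 0) ≤ v 1 := by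
        by_contra hc
        exact hn ⟨hA1, hc⟩
      exact ⟨hA1, le_antisymm hge hle⟩
    · rintro ⟨hA1, heq⟩
      exact ⟨⟨hA1, heq.ge⟩, fun h => h.2 heq.le⟩
  have hdT₁ : Set.Definable (Set.univ : Set P) Language.order T₁ :=
    ((hd₁.preimage_comp (![1, 2] : Fin 2 → Fin 3)).inter
      (hdle.preimage_comp (![2, 0] : Fin 2 → Fin 3))).image_comp incl
  have hdT₂ : Set.Definable (Set.univ : Set P) Language.order T₂ :=
    ((hd₂.preimage_comp (![1, 2] : Fin 2 → Fin 3)).inter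
      (hdle.preimage_comp (![2, 0] : Fin 2 → Fin 3))).image_comp incl
  have hdΓ : Set.Definable (Set.univ : Set P) Language.order Γ := hdT₁.inter hdT₂.compl
  -- the set of points moved into A
  set E : Set (Fin 2 → P) :=
    (fun w : Fin 3 → P => w ∘ incl) ''
      ((fun w : Fin 3 → P => w ∘ (![0, 2] : Fin 2 → Fin 3)) ⁻¹' Γ) with hEdef
  have hEmem : ∀ v : Fin 2 → P, v ∈ E ↔ g (v 0) ∈ A := by
    intro v
    constructor
    · rintro ⟨w, hw, hv⟩
      have h0 : w 0 = v 0 := congrFun hv 0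
      have hcomp : (w ∘ (![0, 2] : Fin 2 → Fin 3)) = ![v 0, w 2] := by
        funext i
        fin_cases i
        · show w 0 = v 0
          exact h0
        · rfl
      have hw' : (![v 0, w 2] : Fin 2 → P) ∈ Γ := by
        rw [← hcomp]
        exact hw
      rw [hΓmem] at hw'
      simp only [Matrix.cons_val_zero, Matrix.cons_val_one, Matrix.head_cons] at hw'
      have := hw'.1
      rwa [← hw'.2] at this
    · intro hgA
      refine ⟨![v 0, v 1, g (v 0)], ?_, ?_⟩
      · show (![v 0, v 1, g (v 0)] ∘ (![0, 2] : Fin 2 → Fin 3)) ∈ Γ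
        rw [hΓmem]
        exact ⟨hgA, rfl⟩
      · funext i
        fin_cases i <;> rfl
  have hdE : Set.Definable (Set.univ : Set P) Language.order E :=
    (hdΓ.preimage_comp (![0, 2] : Fin 2 → Fin 3)).image_comp incl
  -- the reversed order relation
  set geSet : Set (Fin 2 → P) :=
    (fun w : Fin 2 → P => w ∘ (![1, 0] : Fin 2 → Fin 2)) ⁻¹' leSet with hgeSetdef
  have hdge : Set.Definable (Set.univ : Set P) Language.order geSet :=
    hdle.preimage_comp (![1, 0] : Fin 2 → Fin 2)
  -- final assembly
  have hseteq : {v : Fin 2 → P | g (v 0) = v 1} = Γ ∪ ((leSet ∩ geSet) ∩ Eᶜ) := by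
    ext v
    constructor
    · intro h
      have h' : g (v 0) = v 1 := h
      by_cases hgA : g (v 0) ∈ A
      · exact Or.inl ((hΓmem v).2 ⟨h' ▸ hgA, h'⟩)
      · have hfix : g (v 0) = v 0 := hAmoved _ hgA
        have hv01 : v 0 = v 1 := by
          rw [← hfix]
          exact h'
        refine Or.inr ⟨⟨(hv01.le : v ∈ leSet), (hv01.ge : v ∈ geSet)⟩, ?_⟩
        intro hE'
        exact hgA ((hEmem v).1 hE')
    · intro h
      rcases h with h | ⟨⟨h1, h2⟩, hE'⟩
      · exact ((hΓmem v).1 h).2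
      · have hgA : g (v 0) ∉ A := fun hc => hE' ((hEmem v).2 hc)
        have hfix : g (v 0) = v 0 := hAmoved _ hgA
        show g (v 0) = v 1
        rw [hfix]
        exact le_antisymm (h1 : v 0 ≤ v 1) (h2 : v 1 ≤ v 0)
  rw [hseteq]
  exact hdΓ.union ((hdle.inter hdge).inter hdE.compl)
end

section
/- Let P be a set with two partial orders ≤_p and ≤_q defined on subsets p, q ⊆ P respectively, agreeing on p ∩ q, such that both p and q are end extensions of r = p ∩ q (i.e., r is downward closed in p under ≤_p and in q under ≤_q). Let x ∈ p ∖ r, y ∈ q ∖ r have the same type over r (for all z ∈ r: z ≤_p x iff z ≤_q y). Define a ≤* b on p ∪ q by: a ≤_p b, or a ≤_q b, or (a ≤_p x and y ≤_q b). Then ≤* is transitive. -/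
/-- Fact 3.2(2), transitivity: the amalgamated relation
`a ≤* b iff a ≤ₚ b ∨ a ≤_q b ∨ (a ≤ₚ x ∧ y ≤_q b)` is transitive, when
`≤ₚ, ≤_q` are partial orders on `p, q` agreeing on `r = p ∩ q`, both `p` and
`q` end-extend `r`, `x ∈ p ∖ r`, `y ∈ q ∖ r`, and `x, y` have the same type
over `r`. -/
theorem amalgam_transitive
    (P : Type*) (p q : Set P) (lep leq : P → P → Prop)
    (hp_dom : ∀ a b, lep a b → a ∈ p ∧ b ∈ p)
    (hq_dom : ∀ a b, leq a b → a ∈ q ∧ b ∈ q)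
    (hp_refl : ∀ a ∈ p, lep a a)
    (hp_trans : ∀ a b c, lep a b → lep b c → lep a c)
    (hp_antisymm : ∀ a b, lep a b → lep b a → a = b)
    (hq_refl : ∀ a ∈ q, leq a a)
    (hq_trans : ∀ a b c, leq a b → leq b c → leq a c)
    (hq_antisymm : ∀ a b, leq a b → leq b a → a = b)
    (hagree : ∀ a ∈ p ∩ q, ∀ b ∈ p ∩ q, (lep a b ↔ leq a b))
    (hend_p : ∀ a b, lep a b → b ∈ p ∩ q → a ∈ p ∩ q)
    (hend_q : ∀ a b, leq a b → b ∈ p ∩ q → a ∈ p ∩ q)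
    (x y : P) (hx : x ∈ p \ (p ∩ q)) (hy : y ∈ q \ (p ∩ q))
    (htype : ∀ z ∈ p ∩ q, (lep z x ↔ leq z y)) :
    ∀ a b c : P,
      (lep a b ∨ leq a b ∨ (lep a x ∧ leq y b)) →
      (lep b c ∨ leq b c ∨ (lep b x ∧ leq y c)) →
      (lep a c ∨ leq a c ∨ (lep a x ∧ leq y c)) := by
  intro a b c hab hbc
  rcases hab with h1 | h1 | ⟨h1, h1'⟩ <;> rcases hbc with h2 | h2 | ⟨h2, h2'⟩
  · exact Or.inl (hp_trans a b c h1 h2)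
  · have hbr : b ∈ p ∩ q := ⟨(hp_dom a b h1).2, (hq_dom b c h2).1⟩
    have har := hend_p a b h1 hbr
    exact Or.inr (Or.inl (hq_trans a b c ((hagree a har b hbr).1 h1) h2))
  · exact Or.inr (Or.inr ⟨hp_trans a b x h1 h2, h2'⟩)
  · have hbr : b ∈ p ∩ q := ⟨(hp_dom b c h2).1, (hq_dom a b h1).2⟩
    have har := hend_q a b h1 hbr
    exact Or.inl (hp_trans a b c ((hagree a har b hbr).2 h1) h2)
  · exact Or.inr (Or.inl (hq_trans a b c h1 h2))
  · have hbr : b ∈ p ∩ q := ⟨(hp_dom b x h2).1, (hq_dom a b h1).2⟩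
    have har := hend_q a b h1 hbr
    have hby : leq b y := (htype b hbr).1 h2
    have hay : leq a y := hq_trans a b y h1 hby
    exact Or.inr (Or.inr ⟨(htype a har).2 hay, h2'⟩)
  · have hbr : b ∈ p ∩ q := ⟨(hp_dom b c h2).1, (hq_dom y b h1').2⟩
    exact absurd (hend_q y b h1' hbr) hy.2
  · exact Or.inr (Or.inr ⟨h1, hq_trans y b c h1' h2⟩)
  · exact Or.inr (Or.inr ⟨h1, h2'⟩)
end

section
/- Let p, q be finite sets with partial orders ≤_p, ≤_q agreeing on r = p ∩ q, with both p and q end extensions of r, and x ∈ p, y ∈ q ∖ p having the same type over r (∀z ∈ r: z ≤_p x iff z ≤_q y). Define ≤* on p ∪ q as the relation: a ≤* b iff a ≤_p b or a ≤_q b or (a ≤_p x and y ≤_q b). Then ≤* is a partial order on p ∪ q whose restriction to q equals ≤_q and whose restriction to p equals ≤_p, and moreover p is downward closed in (p ∪ q, ≤*). -/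
/-- Fact 3.2(2): the amalgamated relation `≤*` is a partial order on `p ∪ q`
whose restriction to `q` is `≤_q`, whose restriction to `p` is `≤ₚ`, and for
which `p` is downward closed. Here `p, q` are finite, `≤ₚ, ≤_q` agree on
`r = p ∩ q`, both end-extend `r`, `x ∈ p`, `y ∈ q ∖ p` and `x, y` have the
same type over `r`. -/
theorem amalgam_is_partialOrder
    (P : Type*) (p q : Set P) (hp_fin : p.Finite) (hq_fin : q.Finite)
    (lep leq : P → P → Prop)
    (hp_dom : ∀ a b, lep a b → a ∈ p ∧ b ∈ p)
    (hq_dom : ∀ a b, leq a b → a ∈ q ∧ b ∈ q)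
    (hp_refl : ∀ a ∈ p, lep a a)
    (hp_trans : ∀ a b c, lep a b → lep b c → lep a c)
    (hp_antisymm : ∀ a b, lep a b → lep b a → a = b)
    (hq_refl : ∀ a ∈ q, leq a a)
    (hq_trans : ∀ a b c, leq a b → leq b c → leq a c)
    (hq_antisymm : ∀ a b, leq a b → leq b a → a = b)
    (hagree : ∀ a ∈ p ∩ q, ∀ b ∈ p ∩ q, (lep a b ↔ leq a b))
    (hend_p : ∀ a b, lep a b → b ∈ p ∩ q → a ∈ p ∩ q)
    (hend_q : ∀ a b, leq a b → b ∈ p ∩ q → a ∈ p ∩ q)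
    (x y : P) (hx : x ∈ p) (hy : y ∈ q \ p)
    (htype : ∀ z ∈ p ∩ q, (lep z x ↔ leq z y)) :
    let les : P → P → Prop := fun a b =>
      lep a b ∨ leq a b ∨ (lep a x ∧ leq y b)
    (∀ a ∈ p ∪ q, les a a) ∧
    (∀ a b, les a b → les b a → a = b) ∧
    (∀ a b c, les a b → les b c → les a c) ∧
    (∀ a ∈ q, ∀ b ∈ q, (les a b ↔ leq a b)) ∧
    (∀ a ∈ p, ∀ b ∈ p, (les a b ↔ lep a b)) ∧
    (∀ a b, les a b → b ∈ p → a ∈ p) := by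
  intro les
  obtain ⟨hyq, hynp⟩ := hy
  -- Key fact: anything ≥ y (in ≤_q) is not in p.
  have key : ∀ b, leq y b → b ∉ p := by
    intro b hyb hbp
    exact hynp (hend_q y b hyb ⟨hbp, (hq_dom y b hyb).2⟩).1
  -- if a ≤_p b and a ∈ q then a ≤_q b  (through r)
  have pq : ∀ a b, lep a b → a ∈ q → b ∈ q → leq a b := fun a b h haq hbq =>
    (hagree a ⟨(hp_dom a b h).1, haq⟩ b ⟨(hp_dom a b h).2, hbq⟩).1 h
  have qp : ∀ a b, leq a b → b ∈ p → lep a b := by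
    intro a b h hbp
    have ha := hend_q a b h ⟨hbp, (hq_dom a b h).2⟩
    exact (hagree a ha b ⟨hbp, (hq_dom a b h).2⟩).2 h
  refine ⟨?_, ?_, ?_, ?_, ?_, ?_⟩
  · rintro a (ha | ha)
    · exact Or.inl (hp_refl a ha)
    · exact Or.inr (Or.inl (hq_refl a ha))
  · -- antisymmetry
    rintro a b (h | h | ⟨h1, h2⟩) (h' | h' | ⟨h1', h2'⟩)
    · exact hp_antisymm a b h h'
    · exact hp_antisymm a b h (qp b a h' (hp_dom a b h).1)
    · exact absurd (hp_dom a b h).1 (key a h2')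
    · exact hp_antisymm a b (qp a b h (hp_dom b a h').1) h'
    · exact hq_antisymm a b h h'
    · -- leq a b, lep b x, leq y a : then b ∈ r, leq b y, so y = b ∈ p, contra
      have hb : b ∈ p ∩ q := ⟨(hp_dom b x h1').1, (hq_dom a b h).2⟩
      have hby : leq b y := (htype b hb).1 h1'
      have : y = b := hq_antisymm y b (hq_trans y a b h2' h) hby
      exact absurd (this ▸ hb.1) hynp
    · exact absurd (hp_dom b a h').1 (key b h2)
    · exact absurd (hp_dom a x h1).1 (key a (hq_trans y b a h2 h'))
    · exact absurd (hp_dom a x h1).1 (key a h2')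
  · -- transitivity
    rintro a b c (h | h | ⟨h1, h2⟩) (h' | h' | ⟨h1', h2'⟩)
    · exact Or.inl (hp_trans a b c h h')
    · -- lep a b, leq b c : a,b ∈ r, so leq a b, leq a c
      have hbq := (hq_dom b c h').1
      have haq := (hend_p a b h ⟨(hp_dom a b h).2, hbq⟩).2
      exact Or.inr (Or.inl (hq_trans a b c (pq a b h haq hbq) h'))
    · exact Or.inr (Or.inr ⟨hp_trans a b x h h1', h2'⟩)
    · exact Or.inl (hp_trans a b c (qp a b h (hp_dom b c h').1) h')
    · exact Or.inr (Or.inl (hq_trans a b c h h'))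
    · -- leq a b, lep b x, leq y c : b ∈ r so leq b y, hence leq a c
      have hb : b ∈ p ∩ q := ⟨(hp_dom b x h1').1, (hq_dom a b h).2⟩
      exact Or.inr (Or.inl (hq_trans a y c (hq_trans a b y h ((htype b hb).1 h1')) h2'))
    · exact absurd (hp_dom b c h').1 (key b h2)
    · exact Or.inr (Or.inr ⟨h1, hq_trans y b c h2 h'⟩)
    · exact absurd (hp_dom b x h1').1 (key b h2)
  · -- restriction to q
    intro a ha b hb
    constructor
    · rintro (h | h | ⟨h1, h2⟩)
      · exact pq a b h ha hb
      · exact h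
      · exact hq_trans a y b ((htype a ⟨(hp_dom a x h1).1, ha⟩).1 h1) h2
    · exact fun h => Or.inr (Or.inl h)
  · -- restriction to p
    intro a ha b hb
    constructor
    · rintro (h | h | ⟨h1, h2⟩)
      · exact h
      · exact qp a b h hb
      · exact absurd hb (key b h2)
    · exact fun h => Or.inl h
  · rintro a b (h | h | ⟨h1, h2⟩) hbp
    · exact (hp_dom a b h).1
    · exact (hend_q a b h ⟨hbp, (hq_dom a b h).2⟩).1
    · exact absurd hbp (key b h2)
end

section
/- Let κ be a regular uncountable cardinal and (P, ≤) a partial order with |P| = κ satisfying the strong chain condition. Then for every monotone f : P → P there is a set A ⊆ P with |A| < κ such that for all x ∈ P, f(x) ∈ A ∪ {x}. -/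
open Cardinal

/-- The amalgamated order `X ⊕_{x→y} Y` of two finite suborders of `P`:
`a ≤ b` in the amalgam iff `a ≤ b` inside `X`, or inside `Y`, or
`a ∈ X`, `b ∈ Y` with `a ≤ x` and `y ≤ b`. -/
def AmalgamLE {P : Type*} [PartialOrder P] (X Y : Finset P) (x y : P)
    (a b : P) : Prop :=
  (a ∈ X ∧ b ∈ X ∧ a ≤ b) ∨ (a ∈ Y ∧ b ∈ Y ∧ a ≤ b) ∨
    (a ∈ X ∧ b ∈ Y ∧ a ≤ x ∧ y ≤ b)

/-- The strong chain condition (Definition 3.4) for a partial order `P` at a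
cardinal `κ`: for every `κ`-sequence of finite suborders `X α` with designated
points `x α ∈ X α`, there are indices `α < β` such that `X α` and `X β` are
end extensions of their intersection, `x α` and `x β` have the same type over
the intersection, and the amalgam `X α ⊕_{x α → x β} X β` is a suborder of
`P`. -/
def StrongChainCondition (P : Type*) [PartialOrder P] (κ : Cardinal) : Prop :=
  ∀ (X : κ.ord.ToType → Finset P) (x : κ.ord.ToType → P),
    (∀ α, x α ∈ X α) →
    ∃ α β : κ.ord.ToType, α < β ∧
      (∀ a ∈ X α, ∀ b, b ∈ X α → b ∈ X β → a ≤ b → a ∈ X β) ∧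
      (∀ a ∈ X β, ∀ b, b ∈ X α → b ∈ X β → a ≤ b → a ∈ X α) ∧
      (∀ z, z ∈ X α → z ∈ X β → ((z : P) ≤ x α ↔ z ≤ x β)) ∧
      (∀ a b, (a ∈ X α ∨ a ∈ X β) → (b ∈ X α ∨ b ∈ X β) →
        (a ≤ b ↔ AmalgamLE (X α) (X β) (x α) (x β) a b))



section Aux


variable {P : Type*} [Nonempty P]

/-- Greedy transfinite choice of points of `S` whose pairs `{z, f z}` avoid
all earlier pairs. -/
noncomputable def pickFn (κ : Cardinal) (f : P → P) (S : Set P) : κ.ord.ToType → P :=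
  (IsWellFounded.wf (α := κ.ord.ToType) (r := (· < ·))).fix fun α ih =>
    Classical.epsilon fun z => z ∈ S ∧ ∀ β (h : β < α),
      z ≠ ih β h ∧ z ≠ f (ih β h) ∧ f z ≠ ih β h ∧ f z ≠ f (ih β h)

theorem exists_fresh {κ : Cardinal} {f : P → P} {S : Set P}
    (hS : #S = κ) (hinj : Set.InjOn f S) (hℵ : ℵ₀ ≤ κ)
    (g : κ.ord.ToType → P) (α : κ.ord.ToType) :
    ∃ z, z ∈ S ∧ ∀ β (_ : β < α),
      z ≠ g β ∧ z ≠ f (g β) ∧ f z ≠ g β ∧ f z ≠ f (g β) := by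
  set E : Set P := g '' Set.Iio α ∪ (fun b => f (g b)) '' Set.Iio α with hE
  have hEκ : #E < κ := by
    refine lt_of_le_of_lt (mk_union_le _ _) (Cardinal.add_lt_of_lt hℵ ?_ ?_) <;>
      exact lt_of_le_of_lt (mk_image_le) (mk_Iio_ord_toType α)
  have key : ∃ z, z ∈ S ∧ z ∉ E ∧ f z ∉ E := by
    by_contra hcon
    push_neg at hcon
    have hsub : S ⊆ E ∪ (S ∩ f ⁻¹' E) := by
      intro z hz
      rcases Classical.em (z ∈ E) with h | h
      · exact Or.inl h
      · exact Or.inr ⟨hz, hcon z hz h⟩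
    have h1 : #(S ∩ f ⁻¹' E : Set P) ≤ #E := by
      have := mk_image_eq_of_injOn f (S ∩ f ⁻¹' E) (hinj.mono Set.inter_subset_left)
      rw [← this]
      exact Cardinal.mk_le_mk_of_subset (by rintro _ ⟨x, hx, rfl⟩; exact hx.2)
    have : κ ≤ #E + #(S ∩ f ⁻¹' E : Set P) :=
      hS ▸ le_trans (Cardinal.mk_le_mk_of_subset hsub) (mk_union_le _ _)
    exact absurd this (not_le_of_gt (Cardinal.add_lt_of_lt hℵ hEκ (lt_of_le_of_lt h1 hEκ)))
  obtain ⟨z, hzS, hz1, hz2⟩ := key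
  refine ⟨z, hzS, fun β hβ => ⟨?_, ?_, ?_, ?_⟩⟩
  · rintro rfl; exact hz1 (Or.inl ⟨β, hβ, rfl⟩)
  · rintro rfl; exact hz1 (Or.inr ⟨β, hβ, rfl⟩)
  · intro h; exact hz2 (h ▸ Or.inl ⟨β, hβ, rfl⟩)
  · intro h; exact hz2 (h ▸ Or.inr ⟨β, hβ, rfl⟩)

theorem pickFn_spec {κ : Cardinal} {f : P → P} {S : Set P}
    (hS : #S = κ) (hinj : Set.InjOn f S) (hℵ : ℵ₀ ≤ κ) (α : κ.ord.ToType) :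
    pickFn κ f S α ∈ S ∧ ∀ β, β < α →
      pickFn κ f S α ≠ pickFn κ f S β ∧ pickFn κ f S α ≠ f (pickFn κ f S β) ∧
      f (pickFn κ f S α) ≠ pickFn κ f S β ∧
      f (pickFn κ f S α) ≠ f (pickFn κ f S β) := by
  have heq : pickFn κ f S α = Classical.epsilon fun z => z ∈ S ∧ ∀ β (_ : β < α),
      z ≠ pickFn κ f S β ∧ z ≠ f (pickFn κ f S β) ∧
      f z ≠ pickFn κ f S β ∧ f z ≠ f (pickFn κ f S β) :=
    WellFounded.fix_eq _ _ _
  rw [heq]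
  exact Classical.epsilon_spec (exists_fresh hS hinj hℵ (pickFn κ f S) α)

end Aux


/-- Lemma 3.5, condition C2: in a partial order of regular uncountable size
`κ` with the strong chain condition, every monotone `f : P → P` moves only a
small set of values: there is `A` with `|A| < κ` such that `f x ∈ A ∪ {x}` for
all `x`. -/
theorem monotone_almost_identity_of_strongChainCondition
    (P : Type*) [PartialOrder P] (κ : Cardinal) (hreg : κ.IsRegular)
    (hunc : Cardinal.aleph0 < κ) (hP : #P = κ)
    (hscc : StrongChainCondition P κ) :
    ∀ f : P → P, Monotone f →
      ∃ A : Set P, #A < κ ∧ ∀ x : P, f x ∈ A ∪ {x} := by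
  intro f hf
  have hℵ : ℵ₀ ≤ κ := hunc.le
  have hPne : Nonempty P := by
    rw [← Cardinal.mk_ne_zero_iff, hP]
    exact (lt_trans Cardinal.aleph0_pos hunc).ne'
  set A : Set P := f '' {x | f x ≠ x} with hA
  by_cases hAκ : #A < κ
  · refine ⟨A, hAκ, fun x => ?_⟩
    by_cases h : f x = x
    · exact Or.inr (by simp [h])
    · exact Or.inl ⟨x, h, rfl⟩
  -- otherwise #A = κ; derive a contradiction
  exfalso
  have hAeq : #A = κ := le_antisymm (hP ▸ Cardinal.mk_subtype_le A) (not_lt.mp hAκ)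
  -- choose preimages
  have hch : ∀ a : A, ∃ x, f x ≠ x ∧ f x = a := fun a => a.2
  choose g hg1 hg2 using hch
  have ginj : Function.Injective g := by
    intro a b h
    have : (a : P) = b := by rw [← hg2 a, ← hg2 b, h]
    exact Subtype.ext this
  set S : Set P := Set.range g with hSdef
  have hSκ : #S = κ := by rw [hSdef, Cardinal.mk_range_eq g ginj, hAeq]
  have hSne : ∀ x ∈ S, f x ≠ x := by rintro x ⟨a, rfl⟩; exact hg1 a
  have hinj : Set.InjOn f S := by
    rintro x ⟨a, rfl⟩ y ⟨b, rfl⟩ h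
    rw [hg2 a, hg2 b] at h
    exact congrArg g (Subtype.ext h)
  set p : κ.ord.ToType → P := pickFn κ f S with hp
  have hspec := fun α => pickFn_spec (f := f) hSκ hinj hℵ α
  have hpS : ∀ α, p α ∈ S := fun α => (hspec α).1
  have hdisj : ∀ {α β : κ.ord.ToType}, α ≠ β →
      p α ≠ p β ∧ p α ≠ f (p β) ∧ f (p α) ≠ p β ∧ f (p α) ≠ f (p β) := by
    intro α β hne
    rcases lt_or_gt_of_ne hne with h | h
    · obtain ⟨h1, h2, h3, h4⟩ := (hspec β).2 α h
      exact ⟨h1.symm, h3.symm, h2.symm, h4.symm⟩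
    · exact (hspec α).2 β h
  -- uniformize the order type of the pairs
  set T1 : Set κ.ord.ToType := {γ | p γ ≤ f (p γ)} with hT1
  set T2 : Set κ.ord.ToType := {γ | f (p γ) ≤ p γ} with hT2
  set T3 : Set κ.ord.ToType := {γ | ¬ p γ ≤ f (p γ) ∧ ¬ f (p γ) ≤ p γ} with hT3
  have hcover : (Set.univ : Set κ.ord.ToType) ⊆ T1 ∪ T2 ∪ T3 := by
    intro γ _
    by_cases h1 : p γ ≤ f (p γ)
    · exact Or.inl (Or.inl h1)
    by_cases h2 : f (p γ) ≤ p γ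
    · exact Or.inl (Or.inr h2)
    · exact Or.inr ⟨h1, h2⟩
  have hbig : ∃ T : Set κ.ord.ToType, #T = κ ∧
      ∀ α ∈ T, ∀ β ∈ T, ¬(f (p α) ≤ p α ∧ p β ≤ f (p β)) := by
    have hTle : ∀ T : Set κ.ord.ToType, #T ≤ κ := fun T =>
      (Cardinal.mk_subtype_le T).trans_eq (mk_ord_toType κ)
    have hone : #T1 = κ ∨ #T2 = κ ∨ #T3 = κ := by
      by_contra hcon
      push_neg at hcon
      obtain ⟨c1, c2, c3⟩ := hcon
      have l1 : #T1 < κ := (hTle T1).lt_of_ne c1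
      have l2 : #T2 < κ := (hTle T2).lt_of_ne c2
      have l3 : #T3 < κ := (hTle T3).lt_of_ne c3
      have : κ ≤ #(T1 ∪ T2 ∪ T3 : Set κ.ord.ToType) := by
        calc κ = #(Set.univ : Set κ.ord.ToType) := by
                  rw [Cardinal.mk_univ, mk_ord_toType]
          _ ≤ _ := Cardinal.mk_le_mk_of_subset hcover
      have hlt : #(T1 ∪ T2 ∪ T3 : Set κ.ord.ToType) < κ :=
        lt_of_le_of_lt (mk_union_le _ _)
          (Cardinal.add_lt_of_lt hℵ
            (lt_of_le_of_lt (mk_union_le _ _) (Cardinal.add_lt_of_lt hℵ l1 l2)) l3)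
      exact absurd this (not_le_of_gt hlt)
    rcases hone with h | h | h
    · refine ⟨T1, h, fun α hα β hβ => fun ⟨h1, _⟩ => ?_⟩
      exact hSne _ (hpS α) (le_antisymm h1 hα)
    · refine ⟨T2, h, fun α hα β hβ => fun ⟨_, h2⟩ => ?_⟩
      exact hSne _ (hpS β) (le_antisymm hβ h2)
    · exact ⟨T3, h, fun α hα β hβ => fun ⟨h1, _⟩ => hα.2 h1⟩
  obtain ⟨T, hTκ, hkey⟩ := hbig
  -- reindex by an equivalence κ.ord.ToType ≃ T
  have : #(κ.ord.ToType) = #T := by rw [mk_ord_toType, hTκ]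
  obtain ⟨e⟩ := Cardinal.eq.mp this
  set q : κ.ord.ToType → κ.ord.ToType := fun γ => (e γ : κ.ord.ToType) with hq
  have hqT : ∀ γ, q γ ∈ T := fun γ => (e γ).2
  have hqinj : Function.Injective q := fun a b h => e.injective (Subtype.ext h)
  classical
  set X : κ.ord.ToType → Finset P := fun γ => {p (q γ), f (p (q γ))} with hX
  have hmem1 : ∀ γ, p (q γ) ∈ X γ := fun γ => Finset.mem_insert_self _ _
  have hmem2 : ∀ γ, f (p (q γ)) ∈ X γ := fun γ =>
    Finset.mem_insert_of_mem (Finset.mem_singleton_self _)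
  obtain ⟨α, β, hαβ, _, _, _, hamal⟩ := hscc X (fun γ => p (q γ)) hmem1
  have hne : q α ≠ q β := fun h => (hαβ.ne) (hqinj h)
  obtain ⟨d1, d2, d3, d4⟩ := hdisj hne
  have h1 : p (q α) ≤ p (q β) :=
    (hamal (p (q α)) (p (q β)) (Or.inl (hmem1 α)) (Or.inr (hmem1 β))).mpr
      (Or.inr (Or.inr ⟨hmem1 α, hmem1 β, le_refl _, le_refl _⟩))
  have h2 : f (p (q α)) ≤ f (p (q β)) := hf h1
  have h3 := (hamal (f (p (q α))) (f (p (q β)))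
      (Or.inl (hmem2 α)) (Or.inr (hmem2 β))).mp h2
  rcases h3 with ⟨_, hm, _⟩ | ⟨hm, _, _⟩ | ⟨_, _, hle1, hle2⟩
  · rw [hX, Finset.mem_insert, Finset.mem_singleton] at hm
    rcases hm with h | h
    · exact d2 h.symm
    · exact d4 h.symm
  · rw [hX, Finset.mem_insert, Finset.mem_singleton] at hm
    rcases hm with h | h
    · exact d3 h
    · exact d4 h
  · exact hkey (q α) (hqT α) (q β) (hqT β) ⟨hle1, hle2⟩
end

section
/- Let p and q be finite sets carrying partial orders ≤_p and ≤_q that agree on p ∩ q, and suppose the union relation ≤_p ∪ ≤_q has a transitive closure ≤⁺ on p ∪ q that is antisymmetric. If moreover both p and q are end extensions of r = p ∩ q (r downward closed in each), then the transitive closure of ≤_p ∪ ≤_q equals the relation: a ≤⁺ b iff a ≤_p b or a ≤_q b. -/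
/-- Fact 3.2(1): for finite partial orders `≤ₚ` on `p` and `≤_q` on `q`
agreeing on `r = p ∩ q`, with both `p` and `q` end extensions of `r`, if the
transitive closure of `≤ₚ ∪ ≤_q` is antisymmetric then it adds no new
relations: it coincides with `≤ₚ ∪ ≤_q`. -/
theorem transClosure_eq_union
    (P : Type*) (p q : Set P) (hp_fin : p.Finite) (hq_fin : q.Finite)
    (lep leq : P → P → Prop)
    (hp_dom : ∀ a b, lep a b → a ∈ p ∧ b ∈ p)
    (hq_dom : ∀ a b, leq a b → a ∈ q ∧ b ∈ q)
    (hp_refl : ∀ a ∈ p, lep a a)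
    (hp_trans : ∀ a b c, lep a b → lep b c → lep a c)
    (hp_antisymm : ∀ a b, lep a b → lep b a → a = b)
    (hq_refl : ∀ a ∈ q, leq a a)
    (hq_trans : ∀ a b c, leq a b → leq b c → leq a c)
    (hq_antisymm : ∀ a b, leq a b → leq b a → a = b)
    (hagree : ∀ a ∈ p ∩ q, ∀ b ∈ p ∩ q, (lep a b ↔ leq a b))
    (hend_p : ∀ a b, lep a b → b ∈ p ∩ q → a ∈ p ∩ q)
    (hend_q : ∀ a b, leq a b → b ∈ p ∩ q → a ∈ p ∩ q)
    (hanti : ∀ a b, Relation.TransGen (fun a b => lep a b ∨ leq a b) a b →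
      Relation.TransGen (fun a b => lep a b ∨ leq a b) b a → a = b) :
    ∀ a b : P, Relation.TransGen (fun a b => lep a b ∨ leq a b) a b ↔
      (lep a b ∨ leq a b) := by
  have htrans : ∀ a b c : P, (lep a b ∨ leq a b) → (lep b c ∨ leq b c) →
      (lep a c ∨ leq a c) := by
    rintro a b c (hab | hab) (hbc | hbc)
    · exact Or.inl (hp_trans a b c hab hbc)
    · -- b ∈ p ∩ q
      have hbr : b ∈ p ∩ q := ⟨(hp_dom a b hab).2, (hq_dom b c hbc).1⟩
      have har : a ∈ p ∩ q := hend_p a b hab hbr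
      have : leq a b := (hagree a har b hbr).1 hab
      exact Or.inr (hq_trans a b c this hbc)
    · have hbr : b ∈ p ∩ q := ⟨(hp_dom b c hbc).1, (hq_dom a b hab).2⟩
      have har : a ∈ p ∩ q := hend_q a b hab hbr
      have : lep a b := (hagree a har b hbr).2 hab
      exact Or.inl (hp_trans a b c this hbc)
    · exact Or.inr (hq_trans a b c hab hbc)
  intro a b
  constructor
  · intro h
    induction h with
    | single h => exact h
    | tail _ h ih => exact htrans _ _ _ ih h
  · exact fun h => Relation.TransGen.single h
end

section
/- Let p, q be finite posets with orders agreeing on r = p ∩ q, both separated end extensions of r, and x ∈ p ∖ r, y ∈ q ∖ r with the same type over r. In the amalgam p ⊕_{x→y} q (with order the transitive closure of ≤_p ∪ ≤_q ∪ {(x,y)}), we have x < y, and for every z ∈ r: z < x implies z < y in the amalgam, and the restriction of the amalgam order to p equals ≤_p and to q equals ≤_q. -/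
/-- Basic properties of the amalgam `p ⊕_{x→y} q`: `x <* y`, every `z ∈ r`
strictly below `x` is strictly below `y` in the amalgam, and the amalgam order
restricts to `≤ₚ` on `p` and to `≤_q` on `q`. -/
theorem amalgam_lt_and_restrictions
    (P : Type*) (p q : Set P) (hp_fin : p.Finite) (hq_fin : q.Finite)
    (lep leq : P → P → Prop)
    (hp_dom : ∀ a b, lep a b → a ∈ p ∧ b ∈ p)
    (hq_dom : ∀ a b, leq a b → a ∈ q ∧ b ∈ q)
    (hp_refl : ∀ a ∈ p, lep a a)
    (hp_trans : ∀ a b c, lep a b → lep b c → lep a c)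
    (hp_antisymm : ∀ a b, lep a b → lep b a → a = b)
    (hq_refl : ∀ a ∈ q, leq a a)
    (hq_trans : ∀ a b c, leq a b → leq b c → leq a c)
    (hq_antisymm : ∀ a b, leq a b → leq b a → a = b)
    (hagree : ∀ a ∈ p ∩ q, ∀ b ∈ p ∩ q, (lep a b ↔ leq a b))
    (hend_p : ∀ a b, lep a b → b ∈ p ∩ q → a ∈ p ∩ q)
    (hend_q : ∀ a b, leq a b → b ∈ p ∩ q → a ∈ p ∩ q)
    (x y : P) (hx : x ∈ p \ (p ∩ q)) (hy : y ∈ q \ (p ∩ q))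
    (htype : ∀ z ∈ p ∩ q, (lep z x ↔ leq z y)) :
    let les : P → P → Prop := fun a b =>
      lep a b ∨ leq a b ∨ (lep a x ∧ leq y b)
    (les x y ∧ x ≠ y) ∧
    (∀ z ∈ p ∩ q, lep z x ∧ z ≠ x → les z y ∧ z ≠ y) ∧
    (∀ a ∈ p, ∀ b ∈ p, (les a b ↔ lep a b)) ∧
    (∀ a ∈ q, ∀ b ∈ q, (les a b ↔ leq a b)) := by
  intro les
  obtain ⟨hxp, hxr⟩ := hx
  obtain ⟨hyq, hyr⟩ := hy
  refine ⟨⟨Or.inr (Or.inr ⟨hp_refl x hxp, hq_refl y hyq⟩), ?_⟩, ?_, ?_, ?_⟩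
  · rintro rfl; exact hxr ⟨hxp, hyq⟩
  · rintro z hz ⟨hzx, -⟩
    refine ⟨Or.inr (Or.inr ⟨hzx, hq_refl y hyq⟩), ?_⟩
    rintro rfl; exact hyr hz
  · intro a ha b hb
    constructor
    · rintro (h | h | ⟨hax, hyb⟩)
      · exact h
      · exact (hagree a ⟨ha, (hq_dom a b h).1⟩ b ⟨hb, (hq_dom a b h).2⟩).mpr h
      · exact absurd (hend_q y b hyb ⟨hb, (hq_dom y b hyb).2⟩) hyr
    · exact Or.inl
  · intro a ha b hb
    constructor
    · rintro (h | h | ⟨hax, hyb⟩)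
      · exact (hagree a ⟨(hp_dom a b h).1, ha⟩ b ⟨(hp_dom a b h).2, hb⟩).mp h
      · exact h
      · have haq : a ∈ p ∩ q := ⟨(hp_dom a x hax).1, ha⟩
        exact hq_trans a y b ((htype a haq).mp hax) hyb
    · exact fun h => Or.inr (Or.inl h)
end
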